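/- If a binary word f has a 2-tilde-error overlap of type SS with adjacent error positions (j = i + 2), then f is tilde-non-isometric. -/

import Mathlib

/-- Edit operations on binary words: `R i` flips the bit at position `i`,
`S i` swaps the (distinct) bits at positions `i` and `i+1`. Positions are 0-based. -/
inductive TOp where
  | R (i : ℕ)
  | S (i : ℕ)
deriving DecidableEq

namespace TOp

def apply : TOp → List Bool → List Bool
  | R i, w => w.set i (!(w.getD i false))
  | S i, w => (w.set i (w.getD (i+1) false)).set (i+1) (w.getD i false)

def valid : TOp → List Bool → Prop
  | R i, w => i < w.length
  | S i, w => i + 1 < w.length ∧ w.getD i false ≠ w.getD (i+1) false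

/-- The set of positions modified by an operation. -/
def positions : TOp → Finset ℕ
  | R i => {i}
  | S i => {i, i+1}

/-- The (leftmost) position of an operation. -/
def pos : TOp → ℕ
  | R i => i
  | S i => i

def isR : TOp → Prop
  | R _ => True
  | S _ => False

def isS : TOp → Prop
  | R _ => False
  | S _ => True

end TOp

/-- All operations of a sequence are valid when applied successively starting from `w`. -/
def validSeq : List TOp → List Bool → Prop
  | [], _ => True
  | o :: os, w => o.valid w ∧ validSeq os (o.apply w)

def applySeq : List TOp → List Bool → List Bool
  | [], w => w
  | o :: os, w => applySeq os (o.apply w)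

/-- `ops` is a tilde-transformation from `u` to `v`. -/
def Transforms (ops : List TOp) (u v : List Bool) : Prop :=
  validSeq ops u ∧ applySeq ops u = v

/-- The swap-mismatch (tilde) distance between two words. -/
noncomputable def tdist (u v : List Bool) : ℕ :=
  sInf { n | ∃ ops : List TOp, ops.length = n ∧ Transforms ops u v }

/-- Each position of the word is modified at most once along the sequence. -/
def eachPosOnce (ops : List TOp) : Prop :=
  ops.Pairwise fun o o' => Disjoint o.positions o'.positions

/-- A minimal tilde-transformation: length `tdist u v`, each position changed at most once. -/
def MinimalTransf (ops : List TOp) (u v : List Bool) : Prop :=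
  Transforms ops u v ∧ ops.length = tdist u v ∧ eachPosOnce ops

/-- The list of all words `w_0 = u, w_1, …, w_h` visited by the transformation. -/
def trajectory (ops : List TOp) (u : List Bool) : List (List Bool) :=
  List.scanl (fun w o => o.apply w) u ops

/-- `w` avoids `f` as a factor. -/
def FFree (f w : List Bool) : Prop := ¬ f <:+: w

/-- All words along the transformation are `f`-free. -/
def FreeTransf (f : List Bool) (ops : List TOp) (u : List Bool) : Prop :=
  ∀ w ∈ trajectory ops u, FFree f w

/-- `f` is tilde-isometric. -/
def TildeIsometric (f : List Bool) : Prop :=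
  ∀ u v : List Bool, u.length = v.length → f.length < u.length →
    FFree f u → FFree f v →
      ∃ ops : List TOp, MinimalTransf ops u v ∧ FreeTransf f ops u

/-- `(u,v)` is a pair of tilde-witnesses for `f`. -/
def Witnesses (f u v : List Bool) : Prop :=
  u.length = v.length ∧ FFree f u ∧ FFree f v ∧ 2 ≤ tdist u v ∧
    ∀ ops : List TOp, MinimalTransf ops u v → ¬ FreeTransf f ops u

/-- Hamming distance between equal-length words (number of mismatch positions). -/
def hdist (u v : List Bool) : ℕ := ((u.zip v).filter fun p => p.1 != p.2).length

/-!
Put `m = n - r`. The hypothesis says that `f[k + r] = f[k]` for `k < m`, except on the block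
`i ≤ k < i + 4`, where the letter is flipped. So `w = f ++ f[m, n)` begins with `f`, has this
twisted period `r` on all of its length, and swapping its pairs at `c = r + i` and `c + 2` turns it
into `f[0, r) ++ f`, which contains `f` again.

Flipping a single letter of `w` in the block `[c, c + 4)` gives an `f`-free word: an occurrence of
`f` at offset `t ≤ r` gives `w` the period `t` with a single defect, and computing
`w[y + r + t]` in the two possible orders at `y = i + 2` and `y = i + 3` is contradictory when
`t ≥ 2`. For `t = 1` the defect would have to sit both at `i + 1` and at `i + 3`, and `t = 0`
is impossible outright.

If `S c w` contains `f`, the pair `(R c w, R (c + 1) w)` is a witness: a minimal transformation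
flips `c` and `c + 1` in some order, so it passes through `w` or `S c w`. The same holds at `c + 2`.
If neither `S c w` nor `S (c + 2) w` contains `f`, the pair `(S c w, S (c + 2) w)` is a witness,
since a minimal transformation passes through `w` or `S (c + 2) (S c w)`.
-/

lemma List.ext_getD {α : Type*} {l₁ l₂ : List α} (d : α) (hl : l₁.length = l₂.length)
    (h : ∀ n, l₁.getD n d = l₂.getD n d) : l₁ = l₂ := by
  refine List.ext_getElem hl fun n h₁ h₂ => ?_
  rw [← List.getD_eq_getElem _ d h₁, ← List.getD_eq_getElem _ d h₂, h]

lemma List.getD_set {α : Type*} (l : List α) (a x : ℕ) (b d : α) :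
    (l.set a b).getD x d = if x = a ∧ a < l.length then b else l.getD x d := by
  by_cases h : x = a
  · subst h
    by_cases hx : x < l.length <;> simp [hx]
  · simp [h, Ne.symm h]

lemma List.getD_drop {α : Type*} (l : List α) (m n : ℕ) (d : α) :
    (l.drop m).getD n d = l.getD (m + n) d := by
  simp [List.getElem?_drop]

lemma List.IsPrefix.getD_eq {α : Type*} {l₁ l₂ : List α} (h : l₁ <+: l₂) (d : α) {n : ℕ}
    (hn : n < l₁.length) : l₁.getD n d = l₂.getD n d := by
  obtain ⟨s, rfl⟩ := h
  rw [List.getD_append _ _ _ _ hn]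

lemma List.IsInfix.exists_getD_eq {α : Type*} {l₁ l₂ : List α} (h : l₁ <:+: l₂) (d : α) :
    ∃ t, t + l₁.length ≤ l₂.length ∧ ∀ n < l₁.length, l₁.getD n d = l₂.getD (t + n) d := by
  obtain ⟨s, s', rfl⟩ := h
  refine ⟨s.length, by simp, fun n hn => ?_⟩
  rw [List.append_assoc, List.getD_append_right _ _ _ _ (by omega),
    List.getD_append _ _ _ _ (by omega), Nat.add_sub_cancel_left]

namespace TOp

@[simp]
lemma mem_positions_R {i x : ℕ} : x ∈ (R i).positions ↔ x = i := by
  simp [positions]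

@[simp]
lemma mem_positions_S {i x : ℕ} : x ∈ (S i).positions ↔ x = i ∨ x = i + 1 := by
  simp [positions]

@[simp]
lemma length_apply (o : TOp) (w : List Bool) : (o.apply w).length = w.length := by
  cases o <;> simp [apply]

lemma getD_apply {o : TOp} {w : List Bool} (hv : o.valid w) (x : ℕ) :
    (o.apply w).getD x false = (w.getD x false ^^ decide (x ∈ o.positions)) := by
  cases o with
  | R i =>
    simp only [apply, valid] at hv ⊢
    rw [List.getD_set]
    by_cases hx : x = i <;> simp [hx, hv]
  | S i =>
    obtain ⟨hi, hne⟩ := hv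
    simp only [apply, List.getD_set, List.length_set, mem_positions_S]
    revert hne
    by_cases hx : x = i + 1
    · subst hx
      cases w.getD i false <;> cases w.getD (i + 1) false <;> simp [hi]
    · by_cases hx' : x = i
      · subst hx'
        cases w.getD x false <;> cases w.getD (x + 1) false <;> simp <;> omega
      · simp [hx, hx']

lemma valid_apply {o : TOp} {w : List Bool} (hv : o.valid w) : o.valid (o.apply w) := by
  cases o with
  | R i => simpa [valid] using hv
  | S i =>
    refine ⟨by simpa using hv.1, ?_⟩
    rw [getD_apply hv, getD_apply hv]
    simpa using hv.2

lemma apply_apply {o : TOp} {w : List Bool} (hv : o.valid w) : o.apply (o.apply w) = w :=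
  List.ext_getD false (by simp) fun x => by
    rw [getD_apply (valid_apply hv), getD_apply hv, Bool.xor_assoc, Bool.xor_self, Bool.xor_false]

lemma apply_R_succ_apply_R {w : List Bool} {c : ℕ} (hc : c + 1 < w.length)
    (hne : w.getD c false ≠ w.getD (c + 1) false) :
    (R (c + 1)).apply ((R c).apply w) = (S c).apply w :=
  List.ext_getD false (by simp) fun x => by
    have hS : (S c).valid w := ⟨hc, hne⟩
    rw [getD_apply (by simpa [valid] using hc), getD_apply (by simp [valid]; omega),
      getD_apply hS]
    by_cases hx : x = c + 1
    · simp [hx]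
    · by_cases hx' : x = c <;> simp [hx, hx']

lemma eq_S_of_positions_eq_Ico {o : TOp} {c : ℕ} (h : o.positions = Finset.Ico c (c + 2)) :
    o = S c := by
  have hc := Finset.ext_iff.1 h c
  have hc₁ := Finset.ext_iff.1 h (c + 1)
  cases o <;> simp at hc hc₁ ⊢ <;> omega

lemma positions_ne_Ico_four (o : TOp) (c : ℕ) : o.positions ≠ Finset.Ico c (c + 4) := fun h => by
  have hc := Finset.ext_iff.1 h c
  have hc₃ := Finset.ext_iff.1 h (c + 3)
  cases o <;> simp at hc hc₃ <;> omega

lemma eq_R_of_positions_union_eq_Ico {o₁ o₂ : TOp} {c : ℕ}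
    (h : o₁.positions ∪ o₂.positions = Finset.Ico c (c + 2))
    (hd : Disjoint o₁.positions o₂.positions) : o₁ = R c ∨ o₁ = R (c + 1) := by
  have h₁ := Finset.ext_iff.1 h o₁.pos
  have h₁' := Finset.ext_iff.1 h (o₁.pos + 1)
  have h₂ := Finset.ext_iff.1 h o₂.pos
  have h₂' := Finset.ext_iff.1 h (o₂.pos + 1)
  have hc := Finset.ext_iff.1 h c
  have hc₁ := Finset.ext_iff.1 h (c + 1)
  cases o₁ <;> cases o₂ <;> simp [pos, Finset.disjoint_left] at h₁ h₁' h₂ h₂' hc hc₁ hd ⊢ <;>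
    omega

lemma eq_S_of_positions_union_eq_Ico {o₁ o₂ : TOp} {c : ℕ}
    (h : o₁.positions ∪ o₂.positions = Finset.Ico c (c + 4))
    (hd : Disjoint o₁.positions o₂.positions) : o₁ = S c ∨ o₁ = S (c + 2) := by
  have h₁ := Finset.ext_iff.1 h o₁.pos
  have h₁' := Finset.ext_iff.1 h (o₁.pos + 1)
  have h₂ := Finset.ext_iff.1 h o₂.pos
  have h₂' := Finset.ext_iff.1 h (o₂.pos + 1)
  have hc := Finset.ext_iff.1 h c
  have hc₁ := Finset.ext_iff.1 h (c + 1)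
  have hc₂ := Finset.ext_iff.1 h (c + 2)
  have hc₃ := Finset.ext_iff.1 h (c + 3)
  cases o₁ <;> cases o₂ <;>
    simp [pos, Finset.disjoint_left] at h₁ h₁' h₂ h₂' hc hc₁ hc₂ hc₃ hd ⊢ <;> omega

end TOp

@[simp]
lemma length_applySeq (ops : List TOp) (u : List Bool) : (applySeq ops u).length = u.length := by
  induction ops generalizing u <;> simp [applySeq, *]

lemma getD_applySeq {ops : List TOp} {u : List Bool} (hv : validSeq ops u) (h : eachPosOnce ops)
    (x : ℕ) : (applySeq ops u).getD x false =
      (u.getD x false ^^ decide (∃ o ∈ ops, x ∈ o.positions)) := by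
  induction ops generalizing u with
  | nil => simp [applySeq]
  | cons o os ih =>
    obtain ⟨hdisj, hos⟩ := List.pairwise_cons.1 h
    rw [applySeq, ih hv.2 hos, TOp.getD_apply hv.1]
    by_cases hx : x ∈ o.positions
    · have : ¬ ∃ o' ∈ os, x ∈ o'.positions := fun ⟨o', ho', hx'⟩ =>
        Finset.disjoint_left.1 (hdisj o' ho') hx hx'
      simp [hx, this]
    · simp [hx]

lemma Transforms.exists_mem_positions_iff {ops : List TOp} {u v : List Bool}
    (h : Transforms ops u v) (honce : eachPosOnce ops) (x : ℕ) :
    (∃ o ∈ ops, x ∈ o.positions) ↔ u.getD x false ≠ v.getD x false := by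
  rw [← h.2, getD_applySeq h.1 honce]
  cases u.getD x false <;> simp

lemma Transforms.tdist_le {ops : List TOp} {u v : List Bool} (h : Transforms ops u v) :
    tdist u v ≤ ops.length :=
  Nat.sInf_le ⟨ops, rfl, h⟩

lemma apply_mem_trajectory (o : TOp) (os : List TOp) (u : List Bool) :
    o.apply u ∈ trajectory (o :: os) u := by
  cases os <;> simp [trajectory, List.scanl]

lemma eachPosOnce_swap_swap (i : ℕ) : eachPosOnce [TOp.S i, TOp.S (i + 2)] := by
  simp [eachPosOnce, Finset.disjoint_left]
  omega

lemma validSeq_swap_swap_iff {u : List Bool} {i : ℕ} :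
    validSeq [TOp.S i, TOp.S (i + 2)] u ↔ i + 3 < u.length ∧
      u.getD i false ≠ u.getD (i + 1) false ∧ u.getD (i + 2) false ≠ u.getD (i + 3) false := by
  constructor
  · rintro ⟨hv₀, ⟨hi, hne⟩, -⟩
    rw [TOp.getD_apply hv₀, TOp.getD_apply hv₀] at hne
    simp only [TOp.length_apply] at hi
    exact ⟨hi, hv₀.2, by simpa [show i + 2 + 1 ≠ i by omega] using hne⟩
  · rintro ⟨hi, h₀₁, h₂₃⟩
    have hv₀ : (TOp.S i).valid u := ⟨by omega, h₀₁⟩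
    refine ⟨hv₀, ⟨by simpa using hi, ?_⟩, trivial⟩
    rw [TOp.getD_apply hv₀, TOp.getD_apply hv₀]
    simpa [show i + 2 + 1 ≠ i by omega] using h₂₃

lemma getD_applySeq_swap_swap {u : List Bool} {i : ℕ} (hv : validSeq [TOp.S i, TOp.S (i + 2)] u)
    (x : ℕ) : (applySeq [TOp.S i, TOp.S (i + 2)] u).getD x false =
      (u.getD x false ^^ decide (i ≤ x ∧ x < i + 4)) := by
  rw [getD_applySeq hv (eachPosOnce_swap_swap i)]
  simp only [List.mem_cons, List.not_mem_nil, or_false, exists_eq_or_imp, exists_eq_left,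
    TOp.mem_positions_S]
  congr 1
  simp only [decide_eq_decide]
  omega

lemma TildeIsometric.exists_free_transforms {f u v : List Bool} (hf : TildeIsometric f)
    (hlen : u.length = v.length) (hlt : f.length < u.length) (hu : FFree f u) (hv : FFree f v)
    {ops₀ : List TOp} (h : Transforms ops₀ u v) :
    ∃ ops : List TOp, ops.length ≤ ops₀.length ∧ Transforms ops u v ∧ eachPosOnce ops ∧
      FreeTransf f ops u := by
  obtain ⟨ops, ⟨htr, hmin, honce⟩, hfree⟩ := hf u v hlen hlt hu hv
  exact ⟨ops, hmin ▸ h.tdist_le, htr, honce, hfree⟩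

theorem TildeIsometric.fFree_swap {f w : List Bool} (hf : TildeIsometric f) {c : ℕ}
    (hc : c + 1 < w.length) (hlt : f.length < w.length)
    (hne : w.getD c false ≠ w.getD (c + 1) false) (hw : f <:+: w)
    (h₀ : FFree f ((TOp.R c).apply w)) (h₁ : FFree f ((TOp.R (c + 1)).apply w)) :
    FFree f ((TOp.S c).apply w) := by
  intro hs
  have hR₀ : (TOp.R c).valid w := by simp only [TOp.valid]; omega
  have hR₁ : (TOp.R (c + 1)).valid w := hc
  set u := (TOp.R c).apply w
  have hu : (TOp.R c).apply u = w := TOp.apply_apply hR₀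
  have htr : Transforms [TOp.R c, TOp.R (c + 1)] u ((TOp.R (c + 1)).apply w) :=
    ⟨⟨TOp.valid_apply hR₀, by rwa [hu], trivial⟩, by simp [applySeq, hu]⟩
  obtain ⟨ops, hlen, htr, honce, hfree⟩ :=
    hf.exists_free_transforms (by simp [u]) (by simpa [u] using hlt) h₀ h₁ htr
  have hmis : ∀ x, (∃ o ∈ ops, x ∈ o.positions) ↔ x ∈ Finset.Ico c (c + 2) := by
    intro x
    rw [htr.exists_mem_positions_iff honce, TOp.getD_apply hR₀, TOp.getD_apply hR₁]
    simp only [ne_eq, Bool.xor_right_inj, decide_eq_decide, TOp.mem_positions_R, Finset.mem_Ico]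
    omega
  rcases ops with _ | ⟨o₁, _ | ⟨o₂, _ | ⟨o₃, rest⟩⟩⟩
  · simpa using hmis c
  · obtain rfl := TOp.eq_S_of_positions_eq_Ico (Finset.ext fun x => by simpa using hmis x)
    apply htr.1.1.2
    rw [TOp.getD_apply hR₀, TOp.getD_apply hR₀]
    revert hne
    cases w.getD c false <;> cases w.getD (c + 1) false <;> simp
  · have hd : Disjoint o₁.positions o₂.positions := by simpa [eachPosOnce] using honce
    rcases TOp.eq_R_of_positions_union_eq_Ico (Finset.ext fun x => by simpa using hmis x) hd
      with rfl | rfl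
    · exact hfree _ (apply_mem_trajectory _ _ _) (hu ▸ hw)
    · exact hfree _ (apply_mem_trajectory _ _ _) (TOp.apply_R_succ_apply_R hc hne ▸ hs)
  · simp at hlen

theorem TildeIsometric.not_fFree_swaps {f w : List Bool} (hf : TildeIsometric f) {c : ℕ}
    (hc : c + 3 < w.length) (hlt : f.length < w.length)
    (h₀₁ : w.getD c false ≠ w.getD (c + 1) false)
    (h₂₃ : w.getD (c + 2) false ≠ w.getD (c + 3) false) (hw : f <:+: w)
    (hw' : f <:+: (TOp.S (c + 2)).apply ((TOp.S c).apply w)) :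
    ¬ (FFree f ((TOp.S c).apply w) ∧ FFree f ((TOp.S (c + 2)).apply w)) := by
  rintro ⟨h₀, h₂⟩
  have hS₀ : (TOp.S c).valid w := ⟨by omega, h₀₁⟩
  have hS₂ : (TOp.S (c + 2)).valid w := ⟨hc, h₂₃⟩
  set u := (TOp.S c).apply w
  have hu : (TOp.S c).apply u = w := TOp.apply_apply hS₀
  have htr : Transforms [TOp.S c, TOp.S (c + 2)] u ((TOp.S (c + 2)).apply w) :=
    ⟨⟨TOp.valid_apply hS₀, by rwa [hu], trivial⟩, by simp [applySeq, hu]⟩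
  obtain ⟨ops, hlen, htr, honce, hfree⟩ :=
    hf.exists_free_transforms (by simp [u]) (by simpa [u] using hlt) h₀ h₂ htr
  have hmis : ∀ x, (∃ o ∈ ops, x ∈ o.positions) ↔ x ∈ Finset.Ico c (c + 4) := by
    intro x
    rw [htr.exists_mem_positions_iff honce, TOp.getD_apply hS₀, TOp.getD_apply hS₂]
    simp only [ne_eq, Bool.xor_right_inj, decide_eq_decide, TOp.mem_positions_S, Finset.mem_Ico]
    omega
  rcases ops with _ | ⟨o₁, _ | ⟨o₂, _ | ⟨o₃, rest⟩⟩⟩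
  · simpa using hmis c
  · exact TOp.positions_ne_Ico_four o₁ c (Finset.ext fun x => by simpa using hmis x)
  · have hd : Disjoint o₁.positions o₂.positions := by simpa [eachPosOnce] using honce
    rcases TOp.eq_S_of_positions_union_eq_Ico (Finset.ext fun x => by simpa using hmis x) hd
      with rfl | rfl
    · exact hfree _ (apply_mem_trajectory _ _ _) (hu ▸ hw)
    · exact hfree _ (apply_mem_trajectory _ _ _) hw'
  · simp at hlen

lemma xor_defect_eq_of_twisted_periods {W A B : ℕ → Bool} {N p q y : ℕ}
    (hp : ∀ z < N, W (z + p) = (W z ^^ A z)) (hq : ∀ z < N, W (z + q) = (W z ^^ B z))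
    (hyp : y + p < N) (hyq : y + q < N) : (A y ^^ B (y + p)) = (B y ^^ A (y + q)) := by
  have h := hq (y + p) hyp
  rw [hp y (by omega), add_right_comm, hp (y + q) hyq, hq y (by omega)] at h
  simpa only [Bool.xor_assoc, Bool.xor_right_inj] using h.symm

theorem fFree_apply_R_of_twisted_period {f w : List Bool} {r i c : ℕ} (hpre : f <+: w)
    (hlen : w.length = f.length + r) (hi : i + 4 + r ≤ f.length)
    (h₀₁ : w.getD i false ≠ w.getD (i + 1) false)
    (h₂₃ : w.getD (i + 2) false ≠ w.getD (i + 3) false)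
    (hper : ∀ y < f.length,
      w.getD (y + r) false = (w.getD y false ^^ decide (i ≤ y ∧ y < i + 4)))
    (hc : r + i ≤ c) (hc' : c < r + i + 4) : FFree f ((TOp.R c).apply w) := by
  intro hocc
  obtain ⟨t, ht, hocc⟩ := hocc.exists_getD_eq false
  simp only [TOp.length_apply] at ht
  have hR : (TOp.R c).valid w := by simp only [TOp.valid]; omega
  have hshift : ∀ y < f.length,
      w.getD (y + t) false = (w.getD y false ^^ decide (y + t = c)) := by
    intro y hy
    rw [← hpre.getD_eq false hy, hocc y hy, TOp.getD_apply hR, add_comm t y]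
    simp only [TOp.mem_positions_R, Bool.xor_assoc, Bool.xor_self, Bool.xor_false]
  rcases Nat.lt_or_ge t 2 with ht2 | ht2
  · interval_cases t
    · simpa using hshift c (by omega)
    · have e₁ : i + 1 = c := by
        by_contra h
        exact h₀₁ (by simpa [h] using (hshift i (by omega)).symm)
      have e₃ : i + 3 = c := by
        by_contra h
        exact h₂₃ (by simpa [h] using (hshift (i + 2) (by omega)).symm)
      omega
  · have e₃ : i + 3 + t = c := by
      have := xor_defect_eq_of_twisted_periods (W := fun y => w.getD y false) (p := r) (q := t)
        (y := i + 3) hper hshift (by omega) (by omega)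
      simpa [show i + 3 + r + t ≠ c by omega, show ¬ i + 3 + t < i + 4 by omega] using this
    have e₂ : i + 2 + t = c := by
      have := xor_defect_eq_of_twisted_periods (W := fun y => w.getD y false) (p := r) (q := t)
        (y := i + 2) hper hshift (by omega) (by omega)
      simpa [show i + 2 + r + t ≠ c by omega, show ¬ i + 2 + t < i + 4 by omega] using this
    omega

lemma applySeq_swap_swap_eq_take_append {f w : List Bool} {r i : ℕ} (hpre : f <+: w)
    (hlen : w.length = f.length + r) (hr : r ≤ f.length)
    (hper : ∀ y < f.length,
      w.getD (y + r) false = (w.getD y false ^^ decide (i ≤ y ∧ y < i + 4)))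
    (hv : validSeq [TOp.S (r + i), TOp.S (r + i + 2)] w) :
    applySeq [TOp.S (r + i), TOp.S (r + i + 2)] w = f.take r ++ f := by
  have hi := (validSeq_swap_swap_iff.1 hv).1
  refine List.ext_getD false (by simp [hlen, hr, add_comm]) fun x => ?_
  rw [getD_applySeq_swap_swap hv]
  by_cases hxr : x < r
  · rw [List.getD_append _ _ _ _ (by simp; omega),
      (List.take_prefix r f).getD_eq false (by simp; omega), hpre.getD_eq false (by omega),
      decide_eq_false (by omega), Bool.xor_false]
  · obtain ⟨y, rfl⟩ : ∃ y, x = y + r := ⟨x - r, by omega⟩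
    rw [List.getD_append_right _ _ _ _ (by rw [List.length_take]; omega), List.length_take,
      min_eq_left hr, Nat.add_sub_cancel]
    by_cases hy : y < f.length
    · have hD : (r + i ≤ y + r ∧ y + r < r + i + 4) ↔ (i ≤ y ∧ y < i + 4) := by omega
      rw [hper y hy, hpre.getD_eq false hy]
      simp only [hD, Bool.xor_assoc, Bool.xor_self, Bool.xor_false]
    · rw [List.getD_eq_default _ _ (by omega), List.getD_eq_default _ _ (by omega),
        decide_eq_false (by omega), Bool.xor_false]

theorem not_tildeIsometric_of_twisted_period {f w : List Bool} {r i : ℕ} (hpre : f <+: w)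
    (hlen : w.length = f.length + r) (hr : 1 ≤ r) (hi : i + 4 + r ≤ f.length)
    (h₀₁ : w.getD i false ≠ w.getD (i + 1) false)
    (h₂₃ : w.getD (i + 2) false ≠ w.getD (i + 3) false)
    (hper : ∀ y < f.length,
      w.getD (y + r) false = (w.getD y false ^^ decide (i ≤ y ∧ y < i + 4))) :
    ¬ TildeIsometric f := by
  intro hf
  have hswap : ∀ k, i ≤ k → k < i + 3 → w.getD k false ≠ w.getD (k + 1) false →
      w.getD (r + k) false ≠ w.getD (r + k + 1) false := by
    intro k hk hk' hne
    rw [show r + k + 1 = k + 1 + r by omega, add_comm r k, hper k (by omega),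
      hper (k + 1) (by omega)]
    simpa [hk, hk', show k < i + 4 by omega, show i ≤ k + 1 by omega,
      show k + 1 < i + 4 by omega] using hne
  have h₀₁' := hswap i le_rfl (by omega) h₀₁
  have h₂₃' := hswap (i + 2) (by omega) (by omega) h₂₃
  have hflip : ∀ c, r + i ≤ c → c < r + i + 4 → FFree f ((TOp.R c).apply w) :=
    fun _ => fFree_apply_R_of_twisted_period hpre hlen hi h₀₁ h₂₃ hper
  have hlt : f.length < w.length := by omega
  have hsw : f <:+: (TOp.S (r + i + 2)).apply ((TOp.S (r + i)).apply w) := by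
    change f <:+: applySeq [TOp.S (r + i), TOp.S (r + i + 2)] w
    rw [applySeq_swap_swap_eq_take_append hpre hlen (by omega) hper
      (validSeq_swap_swap_iff.2 ⟨by omega, h₀₁', h₂₃'⟩)]
    exact (List.suffix_append _ _).isInfix
  exact hf.not_fFree_swaps (by omega) hlt h₀₁' h₂₃' hpre.isInfix hsw
    ⟨hf.fFree_swap (by omega) hlt h₀₁' hpre.isInfix (hflip _ le_rfl (by omega))
        (hflip _ (by omega) (by omega)),
      hf.fFree_swap (by omega) hlt h₂₃' hpre.isInfix (hflip _ (by omega) (by omega))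
        (hflip _ (by omega) (by omega))⟩

lemma getD_append_drop_add_of_transforms {f : List Bool} {m r i : ℕ} (hmr : m + r = f.length)
    (h : Transforms [TOp.S i, TOp.S (i + 2)] (f.take m) (f.drop r)) {y : ℕ} (hy : y < f.length) :
    (f ++ f.drop m).getD (y + r) false =
      ((f ++ f.drop m).getD y false ^^ decide (i ≤ y ∧ y < i + 4)) := by
  have hi := (validSeq_swap_swap_iff.1 h.1).1
  simp only [List.length_take] at hi
  rw [List.getD_append _ _ _ _ hy]
  by_cases hym : y < m
  · have := getD_applySeq_swap_swap h.1 y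
    rw [h.2, List.getD_drop, (List.take_prefix m f).getD_eq false (by simp; omega)] at this
    rw [List.getD_append _ _ _ _ (by omega), add_comm, this]
  · rw [List.getD_append_right _ _ _ _ (by omega), List.getD_drop, decide_eq_false (by omega),
      Bool.xor_false]
    congr 1
    omega

theorem stmt14_general (f : List Bool) (n r i : ℕ) (hn : n = f.length) (hr1 : 1 ≤ r) (hr : r < n)
    (htrans : Transforms [TOp.S i, TOp.S (i+2)] (f.take (n - r)) (f.drop r)) :
    ¬ TildeIsometric f := by
  subst hn
  obtain ⟨hi, h₀₁, h₂₃⟩ := validSeq_swap_swap_iff.1 htrans.1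
  have hpre : f <+: f ++ f.drop (f.length - r) := List.prefix_append _ _
  have hw : ∀ k < f.length - r,
      (f.take (f.length - r)).getD k false = (f ++ f.drop (f.length - r)).getD k false :=
    fun k hk => by rw [(List.take_prefix _ f).getD_eq false (by simp; omega),
      hpre.getD_eq false (by omega)]
  simp only [List.length_take] at hi
  rw [hw _ (by omega), hw _ (by omega)] at h₀₁ h₂₃
  exact not_tildeIsometric_of_twisted_period hpre (by simp; omega) hr1 (by omega) h₀₁ h₂₃
    fun y hy => getD_append_drop_add_of_transforms (by omega) htrans hy

theorem stmt14 (f : List Bool) (n r i : ℕ) (hn : n = f.length) (hr1 : 1 ≤ r) (hr : r < n)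
    (htrans : Transforms [TOp.S i, TOp.S (i+2)] (f.take (n - r)) (f.drop r))
    (hdist2 : tdist (f.take (n - r)) (f.drop r) = 2) :
    ¬ TildeIsometric f :=
  stmt14_general f n r i hn hr1 hr htrans
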